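/- (Family II) In the dual bracket of the Galilei bialgebra ansatz, take α ∈ ℝ³ with α ≠ 0, real numbers F, L, v, B and W with W ≠ 0, and set β = 0, γ = 0, ξ = 0, n = 0, θ = 0, ρ = 0, σ = 0, φ_i = F α_i, λ_i = L α_i, ω_{ij} = W(α·α δ_{ij} − α_i α_j), χ_{ij} = B(α_i α_j − (1/3) α·α δ_{ij}) + 2 W v ε_{ijk} α_k. Then the resulting bracket satisfies the Jacobi identity, and hence defines a Lie algebra structure on the 10-dimensional space spanned by H̃, P̃_i, K̃_i, J̃_i. -/
import Mathlib


/-- The Levi-Civita symbol on `{1,2,3}` (indexed by `Fin 3`). -/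
def eps (i j k : Fin 3) : ℝ :=
  if (i, j, k) = (0, 1, 2) ∨ (i, j, k) = (1, 2, 0) ∨ (i, j, k) = (2, 0, 1) then 1
  else if (i, j, k) = (2, 1, 0) ∨ (i, j, k) = (1, 0, 2) ∨ (i, j, k) = (0, 2, 1) then -1
  else 0

/-- The Kronecker delta on `Fin 3`. -/
def kron (i j : Fin 3) : ℝ := if i = j then 1 else 0

/-- The 10-dimensional real vector space with basis `H̃, P̃_i, K̃_i, J̃_i`, an element
being recorded by its coefficients `(h, p, k, j)` in this basis. -/
abbrev DualV : Type := ℝ × (Fin 3 → ℝ) × (Fin 3 → ℝ) × (Fin 3 → ℝ)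

/-- The dual bracket of the Galilei bialgebra ansatz: the antisymmetric bilinear
bracket on the span of `H̃, P̃_i, K̃_i, J̃_i` determined by the structure constants
(with parameters `α, γ, φ, λ, ξ, n ∈ ℝ³`, `β, v, θ, ρ ∈ ℝ`, `σ, χ, ω ∈ M₃(ℝ)`):
`[H̃, J̃_k] = ε_{ikl} α_l J̃_i`;
`[H̃, P̃_k] = γ_k H̃ + (β δ_{ik} + ε_{ikl} α_l) P̃_i + ε_{ikl} φ_l J̃_i`;
`[H̃, K̃_k] = (β δ_{ik} + ε_{ikl} α_l) K̃_i + ε_{ikl} γ_l J̃_i`;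
`[K̃_k, J̃_l] = 2(n_k δ_{li} − n_i δ_{kl}) K̃_i + 2(ε_{ikn} ω_{ln} + ε_{iln} ω_{nk}) J̃_i`;
`[P̃_l, P̃_m] = (χ_{lm} − χ_{ml}) H̃ + 2 ε_{klm}(ρ δ_{ki} + (1/2)(σ_{ik} − σ_{nn} δ_{ik})) P̃_i`
`  + 2(v ε_{ilm} + (1/2)(φ_l δ_{im} − φ_m δ_{il})) K̃_i + 2(λ_l δ_{im} − λ_m δ_{il}) J̃_i`;
`[P̃_k, K̃_l] = (2 ξ_n ε_{nkl} − θ δ_{kl}) H̃ + (2 ε_{nki} ω_{nl} − ω_{nn} ε_{lki}) P̃_i`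
`  + (ρ ε_{kli} − ε_{lin} σ_{kn} − δ_{ki} γ_l) K̃_i + (ε_{ikn} χ_{nl} + ε_{iln} χ_{kn}) J̃_i`;
`[P̃_k, J̃_l] = (2 ω_{lk} − ω_{nn} δ_{lk}) H̃ + 2(n_k δ_{li} − n_i δ_{kl}) P̃_i`
`  − (β ε_{kli} + α_l δ_{ki}) K̃_i + (ε_{ikn} σ_{nl} + ε_{iln} σ_{kn}) J̃_i`;
`[K̃_m, K̃_n] = 2 ε_{kmn} ω_{ki} K̃_i + 2(ξ_m δ_{ni} − ξ_n δ_{mi}) J̃_i`;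
`[J̃_k, J̃_l] = 2(n_k δ_{li} − n_l δ_{ki}) J̃_i`. -/
noncomputable def dualBracket (α γv φv lam ξ nv : Fin 3 → ℝ) (β v θ ρ : ℝ)
    (σ χ ω : Fin 3 → Fin 3 → ℝ) (X Y : DualV) : DualV :=
  -- coefficients of `X` and `Y` on `H̃, P̃, K̃, J̃`
  let h : ℝ := X.1; let p := X.2.1; let κ := X.2.2.1; let j := X.2.2.2
  let h' : ℝ := Y.1; let p' := Y.2.1; let κ' := Y.2.2.1; let j' := Y.2.2.2
  ( -- H̃ component
    (∑ k, (h * p' k - h' * p k) * γv k)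
    + (∑ l, ∑ m, p l * p' m * (χ l m - χ m l))
    + (∑ k, ∑ l, (p k * κ' l - p' k * κ l) * (2 * (∑ n, ξ n * eps n k l) - θ * kron k l))
    + (∑ k, ∑ l, (p k * j' l - p' k * j l) * (2 * ω l k - (∑ n, ω n n) * kron l k)),
    -- P̃ component
    fun i =>
      (∑ k, (h * p' k - h' * p k) * (β * kron i k + ∑ l, eps i k l * α l))
      + (∑ l, ∑ m, p l * p' m *
          (2 * ∑ k, eps k l m * (ρ * kron k i + (1/2) * (σ i k - (∑ n, σ n n) * kron i k))))
      + (∑ k, ∑ l, (p k * κ' l - p' k * κ l) *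
          (2 * (∑ n, eps n k i * ω n l) - (∑ n, ω n n) * eps l k i))
      + (∑ k, ∑ l, (p k * j' l - p' k * j l) * (2 * (nv k * kron l i - nv i * kron k l))),
    -- K̃ component
    fun i =>
      (∑ k, (h * κ' k - h' * κ k) * (β * kron i k + ∑ l, eps i k l * α l))
      + (∑ k, ∑ l, (κ k * j' l - κ' k * j l) * (2 * (nv k * kron l i - nv i * kron k l)))
      + (∑ l, ∑ m, p l * p' m *
          (2 * (v * eps i l m + (1/2) * (φv l * kron i m - φv m * kron i l))))
      + (∑ k, ∑ l, (p k * κ' l - p' k * κ l) *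
          (ρ * eps k l i - (∑ n, eps l i n * σ k n) - kron k i * γv l))
      + (∑ k, ∑ l, (p k * j' l - p' k * j l) * (-(β * eps k l i + α l * kron k i)))
      + (∑ m, ∑ n, κ m * κ' n * (2 * ∑ k, eps k m n * ω k i)),
    -- J̃ component
    fun i =>
      (∑ k, (h * j' k - h' * j k) * (∑ l, eps i k l * α l))
      + (∑ k, (h * p' k - h' * p k) * (∑ l, eps i k l * φv l))
      + (∑ k, (h * κ' k - h' * κ k) * (∑ l, eps i k l * γv l))
      + (∑ k, ∑ l, (κ k * j' l - κ' k * j l) *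
          (2 * ∑ n, (eps i k n * ω l n + eps i l n * ω n k)))
      + (∑ l, ∑ m, p l * p' m * (2 * (lam l * kron i m - lam m * kron i l)))
      + (∑ k, ∑ l, (p k * κ' l - p' k * κ l) * (∑ n, (eps i k n * χ n l + eps i l n * χ k n)))
      + (∑ k, ∑ l, (p k * j' l - p' k * j l) * (∑ n, (eps i k n * σ n l + eps i l n * σ k n)))
      + (∑ m, ∑ n, κ m * κ' n * (2 * (ξ m * kron n i - ξ n * kron m i)))
      + (∑ k, ∑ l, j k * j' l * (2 * (nv k * kron l i - nv l * kron k i))) )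

/-- A bracket operation on `DualV` satisfies the Jacobi identity. -/
def JacobiHolds (br : DualV → DualV → DualV) : Prop :=
  ∀ X Y Z : DualV, br X (br Y Z) + br Z (br X Y) + br Y (br Z X) = 0

lemma eps_000 : eps 0 0 0 = 0 := by rfl
lemma eps_001 : eps 0 0 1 = 0 := by rfl
lemma eps_002 : eps 0 0 2 = 0 := by rfl
lemma eps_010 : eps 0 1 0 = 0 := by rfl
lemma eps_011 : eps 0 1 1 = 0 := by rfl
lemma eps_012 : eps 0 1 2 = 1 := by rfl
lemma eps_020 : eps 0 2 0 = 0 := by rfl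
lemma eps_021 : eps 0 2 1 = -1 := by rfl
lemma eps_022 : eps 0 2 2 = 0 := by rfl
lemma eps_100 : eps 1 0 0 = 0 := by rfl
lemma eps_101 : eps 1 0 1 = 0 := by rfl
lemma eps_102 : eps 1 0 2 = -1 := by rfl
lemma eps_110 : eps 1 1 0 = 0 := by rfl
lemma eps_111 : eps 1 1 1 = 0 := by rfl
lemma eps_112 : eps 1 1 2 = 0 := by rfl
lemma eps_120 : eps 1 2 0 = 1 := by rfl
lemma eps_121 : eps 1 2 1 = 0 := by rfl
lemma eps_122 : eps 1 2 2 = 0 := by rfl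
lemma eps_200 : eps 2 0 0 = 0 := by rfl
lemma eps_201 : eps 2 0 1 = 1 := by rfl
lemma eps_202 : eps 2 0 2 = 0 := by rfl
lemma eps_210 : eps 2 1 0 = -1 := by rfl
lemma eps_211 : eps 2 1 1 = 0 := by rfl
lemma eps_212 : eps 2 1 2 = 0 := by rfl
lemma eps_220 : eps 2 2 0 = 0 := by rfl
lemma eps_221 : eps 2 2 1 = 0 := by rfl
lemma eps_222 : eps 2 2 2 = 0 := by rfl
lemma kron_00 : kron 0 0 = 1 := by rfl
lemma kron_01 : kron 0 1 = 0 := by rfl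
lemma kron_02 : kron 0 2 = 0 := by rfl
lemma kron_10 : kron 1 0 = 0 := by rfl
lemma kron_11 : kron 1 1 = 1 := by rfl
lemma kron_12 : kron 1 2 = 0 := by rfl
lemma kron_20 : kron 2 0 = 0 := by rfl
lemma kron_21 : kron 2 1 = 0 := by rfl
lemma kron_22 : kron 2 2 = 1 := by rfl

noncomputable def br2 (α : Fin 3 → ℝ) (F L v B W : ℝ) (X Y : DualV) : DualV :=
  match X, Y with
  | (xh, xp, xk, xj), (yh, yp, yk, yj) =>
    ( (2 : ℝ) * W * α 0 * α 0 * xj 0 * yp 0 - (2 : ℝ) * W * α 0 * α 0 * xp 0 * yj 0 + (2 : ℝ) * W * α 0 * α 1 * xj 0 * yp 1 + (2 : ℝ) * W * α 0 * α 1 * xj 1 * yp 0 - (2 : ℝ) * W * α 0 * α 1 * xp 0 * yj 1 - (2 : ℝ) * W * α 0 * α 1 * xp 1 * yj 0 + (2 : ℝ) * W * α 0 * α 2 * xj 0 * yp 2 + (2 : ℝ) * W * α 0 * α 2 * xj 2 * yp 0 - (2 : ℝ) * W * α 0 * α 2 * xp 0 * yj 2 - (2 : ℝ) * W * α 0 *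 α 2 * xp 2 * yj 0 + (4 : ℝ) * W * α 0 * v * xp 1 * yp 2 - (4 : ℝ) * W * α 0 * v * xp 2 * yp 1 + (2 : ℝ) * W * α 1 * α 1 * xj 1 * yp 1 - (2 : ℝ) * W * α 1 * α 1 * xp 1 * yj 1 + (2 : ℝ) * W * α 1 * α 2 * xj 1 * yp 2 + (2 : ℝ) * W * α 1 * α 2 * xj 2 * yp 1 - (2 : ℝ) * W * α 1 * α 2 * xp 1 * yj 2 - (2 : ℝ) * W * α 1 * α 2 * xp 2 * yj 1 - (4 : ℝ) * W * α 1 * v * xp 0 * yp 2 + (4 : ℝ) * W * α 1 * v * xp 2 * yp 0 + (2 : ℝ) * W * α 2 * α 2 * xj 2 * yp 2 - (2 : ℝ) * W * α 2 * α 2 * xp 2 * yj 2 + (4 : ℝ) * W * α 2 * v * xp 0 * yp 1 - (4 : ℝ) * W * α 2 * v * xp 1 * yp 0,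
      ![ (2 : ℝ) * W * α 0 * α 1 * xk 0 * yp 2 - (2 : ℝ) * W * α 0 * α 1 * xp 2 * yk 0 - (2 : ℝ) * W * α 0 * α 2 * xk 0 * yp 1 + (2 : ℝ) * W * α 0 * α 2 * xp 1 * yk 0 + (2 : ℝ) * W * α 1 * α 1 * xk 1 * yp 2 - (2 : ℝ) * W * α 1 * α 1 * xp 2 * yk 1 - (2 : ℝ) * W * α 1 * α 2 * xk 1 * yp 1 + (2 : ℝ) * W * α 1 * α 2 * xk 2 * yp 2 + (2 : ℝ) * W * α 1 * α 2 * xp 1 * yk 1 - (2 : ℝ) * W * α 1 * α 2 * xp 2 * yk 2 - (2 : ℝ) * W * α 2 * α 2 * xk 2 * yp 1 + (2 : ℝ) * W * α 2 * α 2 * xp 1 * yk 2 - (1 : ℝ) * α 1 * xh * yp 2 + (1 : ℝ) * α 1 * xp 2 * yh + (1 : ℝ) * α 2 * xh * yp 1 - (1 : ℝ) * α 2 * xp 1 * yh,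
        -(2 : ℝ) * W * α 0 * α 0 * xk 0 * yp 2 + (2 : ℝ) * W * α 0 * α 0 * xp 2 * yk 0 - (2 : ℝ) * W * α 0 * α 1 * xk 1 * yp 2 + (2 : ℝ) * W * α 0 * α 1 * xp 2 * yk 1 + (2 : ℝ) * W * α 0 * α 2 * xk 0 * yp 0 - (2 : ℝ) * W * α 0 * α 2 * xk 2 * yp 2 - (2 : ℝ) * W * α 0 * α 2 * xp 0 * yk 0 + (2 : ℝ) * W * α 0 * α 2 * xp 2 * yk 2 + (2 : ℝ) * W * α 1 * α 2 * xk 1 * yp 0 - (2 : ℝ) * W * α 1 * α 2 * xp 0 * yk 1 + (2 : ℝ) * W * α 2 * α 2 * xk 2 * yp 0 - (2 : ℝ) * W * α 2 * α 2 * xp 0 * yk 2 + (1 : ℝ) * α 0 * xh * yp 2 - (1 : ℝ) * α 0 * xp 2 * yh - (1 : ℝ) * α 2 * xh * yp 0 + (1 : ℝ) * α 2 * xp 0 * yh,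
        (2 : ℝ) * W * α 0 * α 0 * xk 0 * yp 1 - (2 : ℝ) * W * α 0 * α 0 * xp 1 * yk 0 - (2 : ℝ) * W * α 0 * α 1 * xk 0 * yp 0 + (2 : ℝ) * W * α 0 * α 1 * xk 1 * yp 1 + (2 : ℝ) * W * α 0 * α 1 * xp 0 * yk 0 - (2 : ℝ) * W * α 0 * α 1 * xp 1 * yk 1 + (2 : ℝ) * W * α 0 * α 2 * xk 2 * yp 1 - (2 : ℝ) * W * α 0 * α 2 * xp 1 * yk 2 - (2 : ℝ) * W * α 1 * α 1 * xk 1 * yp 0 + (2 : ℝ) * W * α 1 * α 1 * xp 0 * yk 1 - (2 : ℝ) * W * α 1 * α 2 * xk 2 * yp 0 + (2 : ℝ) * W * α 1 * α 2 * xp 0 * yk 2 - (1 : ℝ) * α 0 * xh * yp 1 + (1 : ℝ) * α 0 * xp 1 * yh + (1 : ℝ) * α 1 * xh * yp 0 - (1 : ℝ) * α 1 * xp 0 * yh ],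
      ![ -(1 : ℝ) * F * α 1 * xp 0 * yp 1 + (1 : ℝ) * F * α 1 * xp 1 * yp 0 - (1 : ℝ) * F * α 2 * xp 0 * yp 2 + (1 : ℝ) * F * α 2 * xp 2 * yp 0 + (2 : ℝ) * W * α 0 * α 1 * xk 0 * yk 2 - (2 : ℝ) * W * α 0 * α 1 * xk 2 * yk 0 - (2 : ℝ) * W * α 0 * α 2 * xk 0 * yk 1 + (2 : ℝ) * W * α 0 * α 2 * xk 1 * yk 0 + (2 : ℝ) * W * α 1 * α 1 * xk 1 * yk 2 - (2 : ℝ) * W * α 1 * α 1 * xk 2 * yk 1 + (2 : ℝ) * W * α 2 * α 2 * xk 1 * yk 2 - (2 : ℝ) * W * α 2 * α 2 * xk 2 * yk 1 + (1 : ℝ) * α 0 * xj 0 * yp 0 - (1 : ℝ) * α 0 * xp 0 * yj 0 - (1 : ℝ) * α 1 * xh * yk 2 + (1 : ℝ) * α 1 * xj 1 * yp 0 + (1 : ℝ) * α 1 * xk 2 * yh - (1 : ℝ) * α 1 * xp 0 * yj 1 + (1 : ℝ) * α 2 * xh * yk 1 + (1 : ℝ) * α 2 * xj 2 * yp 0 -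 (1 : ℝ) * α 2 * xk 1 * yh - (1 : ℝ) * α 2 * xp 0 * yj 2 + (2 : ℝ) * v * xp 1 * yp 2 - (2 : ℝ) * v * xp 2 * yp 1,
        (1 : ℝ) * F * α 0 * xp 0 * yp 1 - (1 : ℝ) * F * α 0 * xp 1 * yp 0 - (1 : ℝ) * F * α 2 * xp 1 * yp 2 + (1 : ℝ) * F * α 2 * xp 2 * yp 1 - (2 : ℝ) * W * α 0 * α 0 * xk 0 * yk 2 + (2 : ℝ) * W * α 0 * α 0 * xk 2 * yk 0 - (2 : ℝ) * W * α 0 * α 1 * xk 1 * yk 2 + (2 : ℝ) * W * α 0 * α 1 * xk 2 * yk 1 - (2 : ℝ) * W * α 1 * α 2 * xk 0 * yk 1 + (2 : ℝ) * W * α 1 * α 2 * xk 1 * yk 0 - (2 : ℝ) * W * α 2 * α 2 * xk 0 * yk 2 + (2 : ℝ) * W * α 2 * α 2 * xk 2 * yk 0 + (1 : ℝ) * α 0 * xh * yk 2 + (1 : ℝ) * α 0 * xj 0 * yp 1 - (1 : ℝ) * α 0 * xk 2 * yh - (1 : ℝ) * α 0 * xp 1 * yj 0 + (1 : ℝ)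 * α 1 * xj 1 * yp 1 - (1 : ℝ) * α 1 * xp 1 * yj 1 - (1 : ℝ) * α 2 * xh * yk 0 + (1 : ℝ) * α 2 * xj 2 * yp 1 + (1 : ℝ) * α 2 * xk 0 * yh - (1 : ℝ) * α 2 * xp 1 * yj 2 - (2 : ℝ) * v * xp 0 * yp 2 + (2 : ℝ) * v * xp 2 * yp 0,
        (1 : ℝ) * F * α 0 * xp 0 * yp 2 - (1 : ℝ) * F * α 0 * xp 2 * yp 0 + (1 : ℝ) * F * α 1 * xp 1 * yp 2 - (1 : ℝ) * F * α 1 * xp 2 * yp 1 + (2 : ℝ) * W * α 0 * α 0 * xk 0 * yk 1 - (2 : ℝ) * W * α 0 * α 0 * xk 1 * yk 0 - (2 : ℝ) * W * α 0 * α 2 * xk 1 * yk 2 + (2 : ℝ) * W * α 0 * α 2 * xk 2 * yk 1 + (2 : ℝ) * W * α 1 * α 1 * xk 0 * yk 1 - (2 : ℝ) * W * α 1 * α 1 * xk 1 * yk 0 + (2 : ℝ) * W * α 1 * α 2 * xk 0 * yk 2 - (2 : ℝ) * W * α 1 * α 2 * xk 2 * yk 0 - (1 : ℝ) * α 0 *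 xh * yk 1 + (1 : ℝ) * α 0 * xj 0 * yp 2 + (1 : ℝ) * α 0 * xk 1 * yh - (1 : ℝ) * α 0 * xp 2 * yj 0 + (1 : ℝ) * α 1 * xh * yk 0 + (1 : ℝ) * α 1 * xj 1 * yp 2 - (1 : ℝ) * α 1 * xk 0 * yh - (1 : ℝ) * α 1 * xp 2 * yj 1 + (1 : ℝ) * α 2 * xj 2 * yp 2 - (1 : ℝ) * α 2 * xp 2 * yj 2 + (2 : ℝ) * v * xp 0 * yp 1 - (2 : ℝ) * v * xp 1 * yp 0 ],
      ![ (1 : ℝ) * B * α 0 * α 1 * xk 0 * yp 2 + (1 : ℝ) * B * α 0 * α 1 * xk 2 * yp 0 - (1 : ℝ) * B * α 0 * α 1 * xp 0 * yk 2 - (1 : ℝ) * B * α 0 * α 1 * xp 2 * yk 0 - (1 : ℝ) * B * α 0 * α 2 * xk 0 * yp 1 - (1 : ℝ) * B * α 0 * α 2 * xk 1 * yp 0 + (1 : ℝ) * B * α 0 * α 2 * xp 0 * yk 1 + (1 : ℝ) * B * α 0 * α 2 * xp 1 * yk 0 + (1 : ℝ) * B * α 1 * α 1 * xk 1 * yp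 2 + (1 : ℝ) * B * α 1 * α 1 * xk 2 * yp 1 - (1 : ℝ) * B * α 1 * α 1 * xp 1 * yk 2 - (1 : ℝ) * B * α 1 * α 1 * xp 2 * yk 1 - (2 : ℝ) * B * α 1 * α 2 * xk 1 * yp 1 + (2 : ℝ) * B * α 1 * α 2 * xk 2 * yp 2 + (2 : ℝ) * B * α 1 * α 2 * xp 1 * yk 1 - (2 : ℝ) * B * α 1 * α 2 * xp 2 * yk 2 - (1 : ℝ) * B * α 2 * α 2 * xk 1 * yp 2 - (1 : ℝ) * B * α 2 * α 2 * xk 2 * yp 1 + (1 : ℝ) * B * α 2 * α 2 * xp 1 * yk 2 + (1 : ℝ) * B * α 2 * α 2 * xp 2 * yk 1 - (1 : ℝ) * F * α 1 * xh * yp 2 + (1 : ℝ) * F * α 1 * xp 2 * yh + (1 : ℝ) * F * α 2 * xh * yp 1 - (1 : ℝ) * F * α 2 * xp 1 * yh - (2 : ℝ) * L * α 1 * xp 0 * yp 1 + (2 : ℝ) * L * α 1 * xp 1 * yp 0 - (2 : ℝ) * L * α 2 * xp 0 * yp 2 + (2 : ℝ) * L * α 2 * xp 2 * yp 0 - (2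 : ℝ) * W * α 0 * α 1 * xj 0 * yk 2 - (2 : ℝ) * W * α 0 * α 1 * xj 2 * yk 0 + (2 : ℝ) * W * α 0 * α 1 * xk 0 * yj 2 + (2 : ℝ) * W * α 0 * α 1 * xk 2 * yj 0 + (2 : ℝ) * W * α 0 * α 2 * xj 0 * yk 1 + (2 : ℝ) * W * α 0 * α 2 * xj 1 * yk 0 - (2 : ℝ) * W * α 0 * α 2 * xk 0 * yj 1 - (2 : ℝ) * W * α 0 * α 2 * xk 1 * yj 0 - (2 : ℝ) * W * α 1 * α 1 * xj 1 * yk 2 - (2 : ℝ) * W * α 1 * α 1 * xj 2 * yk 1 + (2 : ℝ) * W * α 1 * α 1 * xk 1 * yj 2 + (2 : ℝ) * W * α 1 * α 1 * xk 2 * yj 1 + (4 : ℝ) * W * α 1 * α 2 * xj 1 * yk 1 - (4 : ℝ) * W * α 1 * α 2 * xj 2 * yk 2 - (4 : ℝ) * W * α 1 * α 2 * xk 1 * yj 1 + (4 : ℝ) * W * α 1 * α 2 * xk 2 * yj 2 - (2 : ℝ) * W * α 1 * v * xk 0 * yp 1 + (2 : ℝ) * W * α 1 * v * xk 1 * yp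 0 - (2 : ℝ) * W * α 1 * v * xp 0 * yk 1 + (2 : ℝ) * W * α 1 * v * xp 1 * yk 0 + (2 : ℝ) * W * α 2 * α 2 * xj 1 * yk 2 + (2 : ℝ) * W * α 2 * α 2 * xj 2 * yk 1 - (2 : ℝ) * W * α 2 * α 2 * xk 1 * yj 2 - (2 : ℝ) * W * α 2 * α 2 * xk 2 * yj 1 - (2 : ℝ) * W * α 2 * v * xk 0 * yp 2 + (2 : ℝ) * W * α 2 * v * xk 2 * yp 0 - (2 : ℝ) * W * α 2 * v * xp 0 * yk 2 + (2 : ℝ) * W * α 2 * v * xp 2 * yk 0 - (1 : ℝ) * α 1 * xh * yj 2 + (1 : ℝ) * α 1 * xj 2 * yh + (1 : ℝ) * α 2 * xh * yj 1 - (1 : ℝ) * α 2 * xj 1 * yh,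
        -(1 : ℝ) * B * α 0 * α 0 * xk 0 * yp 2 - (1 : ℝ) * B * α 0 * α 0 * xk 2 * yp 0 + (1 : ℝ) * B * α 0 * α 0 * xp 0 * yk 2 + (1 : ℝ) * B * α 0 * α 0 * xp 2 * yk 0 - (1 : ℝ) * B * α 0 * α 1 * xk 1 * yp 2 - (1 : ℝ) * B * α 0 * α 1 * xk 2 * yp 1 + (1 : ℝ) * B * α 0 * α 1 * xp 1 * yk 2 + (1 : ℝ) * B * α 0 * α 1 * xp 2 * yk 1 + (2 : ℝ) * B * α 0 * α 2 * xk 0 * yp 0 - (2 : ℝ) * B * α 0 * α 2 * xk 2 * yp 2 - (2 : ℝ) * B * α 0 * α 2 * xp 0 * yk 0 + (2 : ℝ) * B * α 0 * α 2 * xp 2 * yk 2 + (1 : ℝ) * B * α 1 * α 2 * xk 0 * yp 1 + (1 : ℝ) * B * α 1 * α 2 * xk 1 * yp 0 - (1 : ℝ) * B * α 1 * α 2 * xp 0 * yk 1 - (1 : ℝ) * B * α 1 * α 2 * xp 1 * yk 0 + (1 : ℝ) * B * α 2 * α 2 * xk 0 * yp 2 + (1 : ℝ) * B * α 2 * α 2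 * xk 2 * yp 0 - (1 : ℝ) * B * α 2 * α 2 * xp 0 * yk 2 - (1 : ℝ) * B * α 2 * α 2 * xp 2 * yk 0 + (1 : ℝ) * F * α 0 * xh * yp 2 - (1 : ℝ) * F * α 0 * xp 2 * yh - (1 : ℝ) * F * α 2 * xh * yp 0 + (1 : ℝ) * F * α 2 * xp 0 * yh + (2 : ℝ) * L * α 0 * xp 0 * yp 1 - (2 : ℝ) * L * α 0 * xp 1 * yp 0 - (2 : ℝ) * L * α 2 * xp 1 * yp 2 + (2 : ℝ) * L * α 2 * xp 2 * yp 1 + (2 : ℝ) * W * α 0 * α 0 * xj 0 * yk 2 + (2 : ℝ) * W * α 0 * α 0 * xj 2 * yk 0 - (2 : ℝ) * W * α 0 * α 0 * xk 0 * yj 2 - (2 : ℝ) * W * α 0 * α 0 * xk 2 * yj 0 + (2 : ℝ) * W * α 0 * α 1 * xj 1 * yk 2 + (2 : ℝ) * W * α 0 * α 1 * xj 2 * yk 1 - (2 : ℝ) * W * α 0 * α 1 * xk 1 * yj 2 - (2 : ℝ) * W * α 0 * α 1 * xk 2 * yj 1 - (4 : ℝ) * W * α 0 * α 2 * xj 0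 * yk 0 + (4 : ℝ) * W * α 0 * α 2 * xj 2 * yk 2 + (4 : ℝ) * W * α 0 * α 2 * xk 0 * yj 0 - (4 : ℝ) * W * α 0 * α 2 * xk 2 * yj 2 + (2 : ℝ) * W * α 0 * v * xk 0 * yp 1 - (2 : ℝ) * W * α 0 * v * xk 1 * yp 0 + (2 : ℝ) * W * α 0 * v * xp 0 * yk 1 - (2 : ℝ) * W * α 0 * v * xp 1 * yk 0 - (2 : ℝ) * W * α 1 * α 2 * xj 0 * yk 1 - (2 : ℝ) * W * α 1 * α 2 * xj 1 * yk 0 + (2 : ℝ) * W * α 1 * α 2 * xk 0 * yj 1 + (2 : ℝ) * W * α 1 * α 2 * xk 1 * yj 0 - (2 : ℝ) * W * α 2 * α 2 * xj 0 * yk 2 - (2 : ℝ) * W * α 2 * α 2 * xj 2 * yk 0 + (2 : ℝ) * W * α 2 * α 2 * xk 0 * yj 2 + (2 : ℝ) * W * α 2 * α 2 * xk 2 * yj 0 - (2 : ℝ) * W * α 2 * v * xk 1 * yp 2 + (2 : ℝ) * W * α 2 * v * xk 2 * yp 1 - (2 : ℝ) * W * α 2 * v * xp 1 * yk 2 + (2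 : ℝ) * W * α 2 * v * xp 2 * yk 1 + (1 : ℝ) * α 0 * xh * yj 2 - (1 : ℝ) * α 0 * xj 2 * yh - (1 : ℝ) * α 2 * xh * yj 0 + (1 : ℝ) * α 2 * xj 0 * yh,
        (1 : ℝ) * B * α 0 * α 0 * xk 0 * yp 1 + (1 : ℝ) * B * α 0 * α 0 * xk 1 * yp 0 - (1 : ℝ) * B * α 0 * α 0 * xp 0 * yk 1 - (1 : ℝ) * B * α 0 * α 0 * xp 1 * yk 0 - (2 : ℝ) * B * α 0 * α 1 * xk 0 * yp 0 + (2 : ℝ) * B * α 0 * α 1 * xk 1 * yp 1 + (2 : ℝ) * B * α 0 * α 1 * xp 0 * yk 0 - (2 : ℝ) * B * α 0 * α 1 * xp 1 * yk 1 + (1 : ℝ) * B * α 0 * α 2 * xk 1 * yp 2 + (1 : ℝ) * B * α 0 * α 2 * xk 2 * yp 1 - (1 : ℝ) * B * α 0 * α 2 * xp 1 * yk 2 - (1 : ℝ) * B * α 0 * α 2 * xp 2 * yk 1 - (1 : ℝ) * B * α 1 * α 1 * xk 0 * yp 1 - (1 : ℝ) * B * α 1 * α 1 * xk 1 * yp 0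 + (1 : ℝ) * B * α 1 * α 1 * xp 0 * yk 1 + (1 : ℝ) * B * α 1 * α 1 * xp 1 * yk 0 - (1 : ℝ) * B * α 1 * α 2 * xk 0 * yp 2 - (1 : ℝ) * B * α 1 * α 2 * xk 2 * yp 0 + (1 : ℝ) * B * α 1 * α 2 * xp 0 * yk 2 + (1 : ℝ) * B * α 1 * α 2 * xp 2 * yk 0 - (1 : ℝ) * F * α 0 * xh * yp 1 + (1 : ℝ) * F * α 0 * xp 1 * yh + (1 : ℝ) * F * α 1 * xh * yp 0 - (1 : ℝ) * F * α 1 * xp 0 * yh + (2 : ℝ) * L * α 0 * xp 0 * yp 2 - (2 : ℝ) * L * α 0 * xp 2 * yp 0 + (2 : ℝ) * L * α 1 * xp 1 * yp 2 - (2 : ℝ) * L * α 1 * xp 2 * yp 1 - (2 : ℝ) * W * α 0 * α 0 * xj 0 * yk 1 - (2 : ℝ) * W * α 0 * α 0 * xj 1 * yk 0 + (2 : ℝ) * W * α 0 * α 0 * xk 0 * yj 1 + (2 : ℝ) * W * α 0 * α 0 * xk 1 * yj 0 + (4 : ℝ) * W * α 0 * α 1 * xj 0 * yk 0 - (4 :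 ℝ) * W * α 0 * α 1 * xj 1 * yk 1 - (4 : ℝ) * W * α 0 * α 1 * xk 0 * yj 0 + (4 : ℝ) * W * α 0 * α 1 * xk 1 * yj 1 - (2 : ℝ) * W * α 0 * α 2 * xj 1 * yk 2 - (2 : ℝ) * W * α 0 * α 2 * xj 2 * yk 1 + (2 : ℝ) * W * α 0 * α 2 * xk 1 * yj 2 + (2 : ℝ) * W * α 0 * α 2 * xk 2 * yj 1 + (2 : ℝ) * W * α 0 * v * xk 0 * yp 2 - (2 : ℝ) * W * α 0 * v * xk 2 * yp 0 + (2 : ℝ) * W * α 0 * v * xp 0 * yk 2 - (2 : ℝ) * W * α 0 * v * xp 2 * yk 0 + (2 : ℝ) * W * α 1 * α 1 * xj 0 * yk 1 + (2 : ℝ) * W * α 1 * α 1 * xj 1 * yk 0 - (2 : ℝ) * W * α 1 * α 1 * xk 0 * yj 1 - (2 : ℝ) * W * α 1 * α 1 * xk 1 * yj 0 + (2 : ℝ) * W * α 1 * α 2 * xj 0 * yk 2 + (2 : ℝ) * W * α 1 * α 2 * xj 2 * yk 0 - (2 : ℝ) * W * α 1 * α 2 * xk 0 * yj 2 - (2 :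 ℝ) * W * α 1 * α 2 * xk 2 * yj 0 + (2 : ℝ) * W * α 1 * v * xk 1 * yp 2 - (2 : ℝ) * W * α 1 * v * xk 2 * yp 1 + (2 : ℝ) * W * α 1 * v * xp 1 * yk 2 - (2 : ℝ) * W * α 1 * v * xp 2 * yk 1 - (1 : ℝ) * α 0 * xh * yj 1 + (1 : ℝ) * α 0 * xj 1 * yh + (1 : ℝ) * α 1 * xh * yj 0 - (1 : ℝ) * α 1 * xj 0 * yh ] )

lemma fin3_ext {f g : Fin 3 → ℝ} (h0 : f 0 = g 0) (h1 : f 1 = g 1) (h2 : f 2 = g 2) :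
    f = g := by
  funext i; fin_cases i <;> assumption

set_option maxHeartbeats 2000000 in
lemma br_eq (α : Fin 3 → ℝ) (F L v B W : ℝ) :
    dualBracket α 0 (fun i => F * α i) (fun i => L * α i) 0 0
      0 v 0 0
      0
      (fun i j => B * (α i * α j - (1/3) * (∑ k, α k * α k) * kron i j)
        + 2 * W * v * ∑ k, eps i j k * α k)
      (fun i j => W * ((∑ k, α k * α k) * kron i j - α i * α j))
    = br2 α F L v B W := by
  funext X Y
  obtain ⟨xh, xp, xk, xj⟩ := X
  obtain ⟨yh, yp, yk, yj⟩ := Y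
  refine Prod.ext ?_ (Prod.ext (fin3_ext ?_ ?_ ?_) (Prod.ext (fin3_ext ?_ ?_ ?_) (fin3_ext ?_ ?_ ?_)))
  all_goals
    simp only [dualBracket, br2, Fin.sum_univ_three, Pi.zero_apply, Matrix.cons_val_zero, Matrix.cons_val_one, Matrix.head_cons, Matrix.cons_val_two, Matrix.tail_cons, Fin.isValue, eps_000, eps_001, eps_002, eps_010, eps_011, eps_012, eps_020, eps_021, eps_022, eps_100, eps_101, eps_102, eps_110, eps_111, eps_112, eps_120, eps_121, eps_122, eps_200, eps_201, eps_202, eps_210, eps_211, eps_212, eps_220, eps_221, eps_222, kron_00, kron_01, kron_02, kron_10, kron_11, kron_12, kron_20, kron_21, kron_22]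
  all_goals ring


section JacAux
variable (α : Fin 3 → ℝ) (F L v B W : ℝ)
 (xh yh zh : ℝ) (xp xk xj yp yk yj zp zk zj : Fin 3 → ℝ)

local notation "X'" => ((xh, xp, xk, xj) : DualV)
local notation "Y'" => ((yh, yp, yk, yj) : DualV)
local notation "Z'" => ((zh, zp, zk, zj) : DualV)
local notation "S" => br2 α F L v B W X' (br2 α F L v B W Y' Z')
  + br2 α F L v B W Z' (br2 α F L v B W X' Y')
  + br2 α F L v B W Y' (br2 α F L v B W Z' X')
set_option maxHeartbeats 8000000 in
lemma jacH : (S).1 = 0 := by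
  simp only [br2, Prod.fst_add, Prod.snd_add, Pi.add_apply, Matrix.cons_val_zero,
    Matrix.cons_val_one, Matrix.head_cons, Matrix.cons_val_two, Matrix.tail_cons, Fin.isValue]
  ring

set_option maxHeartbeats 8000000 in
lemma jacP0 : (S).2.1 0 = 0 := by
  simp only [br2, Prod.fst_add, Prod.snd_add, Pi.add_apply, Matrix.cons_val_zero,
    Matrix.cons_val_one, Matrix.head_cons, Matrix.cons_val_two, Matrix.tail_cons, Fin.isValue]
  ring

set_option maxHeartbeats 8000000 in
lemma jacP1 : (S).2.1 1 = 0 := by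
  simp only [br2, Prod.fst_add, Prod.snd_add, Pi.add_apply, Matrix.cons_val_zero,
    Matrix.cons_val_one, Matrix.head_cons, Matrix.cons_val_two, Matrix.tail_cons, Fin.isValue]
  ring

set_option maxHeartbeats 8000000 in
lemma jacP2 : (S).2.1 2 = 0 := by
  simp only [br2, Prod.fst_add, Prod.snd_add, Pi.add_apply, Matrix.cons_val_zero,
    Matrix.cons_val_one, Matrix.head_cons, Matrix.cons_val_two, Matrix.tail_cons, Fin.isValue]
  ring

set_option maxHeartbeats 8000000 in
lemma jacK0 : (S).2.2.1 0 = 0 := by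
  simp only [br2, Prod.fst_add, Prod.snd_add, Pi.add_apply, Matrix.cons_val_zero,
    Matrix.cons_val_one, Matrix.head_cons, Matrix.cons_val_two, Matrix.tail_cons, Fin.isValue]
  ring

set_option maxHeartbeats 8000000 in
lemma jacK1 : (S).2.2.1 1 = 0 := by
  simp only [br2, Prod.fst_add, Prod.snd_add, Pi.add_apply, Matrix.cons_val_zero,
    Matrix.cons_val_one, Matrix.head_cons, Matrix.cons_val_two, Matrix.tail_cons, Fin.isValue]
  ring

set_option maxHeartbeats 8000000 in
lemma jacK2 : (S).2.2.1 2 = 0 := by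
  simp only [br2, Prod.fst_add, Prod.snd_add, Pi.add_apply, Matrix.cons_val_zero,
    Matrix.cons_val_one, Matrix.head_cons, Matrix.cons_val_two, Matrix.tail_cons, Fin.isValue]
  ring

set_option maxHeartbeats 8000000 in
lemma jacJ0 : (S).2.2.2 0 = 0 := by
  simp only [br2, Prod.fst_add, Prod.snd_add, Pi.add_apply, Matrix.cons_val_zero,
    Matrix.cons_val_one, Matrix.head_cons, Matrix.cons_val_two, Matrix.tail_cons, Fin.isValue]
  ring

set_option maxHeartbeats 8000000 in
lemma jacJ1 : (S).2.2.2 1 = 0 := by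
  simp only [br2, Prod.fst_add, Prod.snd_add, Pi.add_apply, Matrix.cons_val_zero,
    Matrix.cons_val_one, Matrix.head_cons, Matrix.cons_val_two, Matrix.tail_cons, Fin.isValue]
  ring

set_option maxHeartbeats 8000000 in
lemma jacJ2 : (S).2.2.2 2 = 0 := by
  simp only [br2, Prod.fst_add, Prod.snd_add, Pi.add_apply, Matrix.cons_val_zero,
    Matrix.cons_val_one, Matrix.head_cons, Matrix.cons_val_two, Matrix.tail_cons, Fin.isValue]
  ring

end JacAux

/-- (Family II) For `α ≠ 0`, `W ≠ 0`, `φ = F α`, `λ = L α`,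
`ω_{ij} = W(α·α δ_{ij} − α_i α_j)`,
`χ_{ij} = B(α_i α_j − (1/3) α·α δ_{ij}) + 2 W v ε_{ijk} α_k`, and all other
parameters zero, the dual bracket of the Galilei bialgebra ansatz satisfies the
Jacobi identity, and hence defines a Lie algebra structure. -/
theorem familyII_jacobi (α : Fin 3 → ℝ) (hα : α ≠ 0)
    (F L v B W : ℝ) (hW : W ≠ 0) :
    JacobiHolds (dualBracket α 0 (fun i => F * α i) (fun i => L * α i) 0 0
      0 v 0 0
      0
      (fun i j => B * (α i * α j - (1/3) * (∑ k, α k * α k) * kron i j)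
        + 2 * W * v * ∑ k, eps i j k * α k)
      (fun i j => W * ((∑ k, α k * α k) * kron i j - α i * α j))) := by
  rw [br_eq]
  intro X Y Z
  obtain ⟨xh, xp, xk, xj⟩ := X
  obtain ⟨yh, yp, yk, yj⟩ := Y
  obtain ⟨zh, zp, zk, zj⟩ := Z
  refine Prod.ext ?_ (Prod.ext (fin3_ext ?_ ?_ ?_) (Prod.ext (fin3_ext ?_ ?_ ?_) (fin3_ext ?_ ?_ ?_)))
  exacts [jacH α F L v B W xh yh zh xp xk xj yp yk yj zp zk zj,
    jacP0 α F L v B W xh yh zh xp xk xj yp yk yj zp zk zj,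
    jacP1 α F L v B W xh yh zh xp xk xj yp yk yj zp zk zj,
    jacP2 α F L v B W xh yh zh xp xk xj yp yk yj zp zk zj,
    jacK0 α F L v B W xh yh zh xp xk xj yp yk yj zp zk zj,
    jacK1 α F L v B W xh yh zh xp xk xj yp yk yj zp zk zj,
    jacK2 α F L v B W xh yh zh xp xk xj yp yk yj zp zk zj,
    jacJ0 α F L v B W xh yh zh xp xk xj yp yk yj zp zk zj,
    jacJ1 α F L v B W xh yh zh xp xk xj yp yk yj zp zk zj,
    jacJ2 α F L v B W xh yh zh xp xk xj yp yk yj zp zk zj]
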